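/- Let Q ⊂ S¹ be the set of points of the form aπ/2ⁿ (a, n integers, n ≥ 0), and φ: Q → S¹ a cyclic-order-preserving injection. Then φ extends to an orientation preserving homeomorphism of S¹ if and only if for every ε > 0 there exists n ∈ ℕ such that for all a ∈ ℤ, the distance between φ(aπ/2ⁿ) and φ((a−1)π/2ⁿ) in S¹ is less than ε. -/

import Mathlib

open Real

instance : Fact (0 < 2 * Real.pi) := ⟨by positivity⟩

/-- The set Q ⊂ S¹ of dyadic points aπ/2ⁿ. -/
def DyadicQ : Set (AddCircle (2 * Real.pi)) :=
  {q | ∃ (a : ℤ) (n : ℕ), q = (((a : ℝ) * Real.pi / 2 ^ n : ℝ) : AddCircle (2 * Real.pi))}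

/-! The forward implication holds because a homeomorphism of the compact circle is uniformly
continuous. Conversely, lift `φ` to a map `L` of `ℝ` with `L (x + 2π) = L x + 2π`; preservation of
the cyclic order makes `L` strictly increasing on the dyadic reals. A step of `L` between
neighbouring points of the `n`-th dyadic grid whose image has length `< ε` on the circle is either
shorter than `ε` or longer than `2π - ε`, and the second alternative is excluded once
`ε ≤ dist (φ π) (φ 0)`: a step inside `[mπ, (m+1)π]` longer than `2π - ε` would bring `φ π` and
`φ 0` closer than `ε`. Hence `L` is uniformly continuous on the dyadic reals, extends to a
continuous increasing lift of degree one, and this lift descends to the required homeomorphism. -/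

open Set Function

namespace AddCircle

variable {p : ℝ} {G : ℝ → ℝ}

theorem coe_add_int_mul_period (x : ℝ) (k : ℤ) : ((x + k * p : ℝ) : AddCircle p) = x := by
  rw [coe_add, ← zsmul_eq_mul, coe_zsmul, coe_period, smul_zero, add_zero]

theorem dist_coe_le_dist (x y : ℝ) : dist (x : AddCircle p) y ≤ dist x y := by
  rw [dist_eq_norm, dist_eq_norm, ← coe_sub]
  exact QuotientAddGroup.norm_mk_le_norm

theorem periodic_coe_comp (hper : ∀ x, G (x + p) = G x + p) :
    Periodic (fun x ↦ (G x : AddCircle p)) p := fun x ↦ by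
  simp only [hper, coe_add_period]

theorem mem_Ico_of_strictMono_lift (hG : StrictMono G) (hper : ∀ x, G (x + p) = G x + p)
    {x y : ℝ} (hy : y ∈ Ico x (x + p)) : G y ∈ Ico (G x) (G x + p) :=
  ⟨hG.monotone hy.1, hper x ▸ hG hy.2⟩

variable [hp : Fact (0 < p)]

theorem coe_toIcoMod (a b : ℝ) : ((toIcoMod hp.out a b : ℝ) : AddCircle p) = b := by
  rw [← self_sub_toIcoDiv_zsmul, coe_sub, coe_zsmul, coe_period, smul_zero, sub_zero]

theorem norm_coe_eq_min {d : ℝ} (h0 : 0 ≤ d) (hd : d < p) :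
    ‖(d : AddCircle p)‖ = min d (p - d) := by
  have hfract : Int.fract (p⁻¹ * d) = p⁻¹ * d :=
    Int.fract_eq_self.2 ⟨by positivity [hp.out], by rwa [inv_mul_lt_iff₀ hp.out, mul_one]⟩
  rw [norm_eq' p hp.out, abs_sub_round_eq_min, hfract, mul_min_of_nonneg _ _ hp.out.le,
    mul_inv_cancel_left₀ hp.out.ne', mul_one_sub, mul_inv_cancel_left₀ hp.out.ne']

theorem sbtw_coe_iff_of_mem_Ico {x y z : ℝ} (hy : y ∈ Ico x (x + p)) (hz : z ∈ Ico x (x + p)) :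
    sbtw (x : AddCircle p) y z ↔ x < y ∧ y < z := by
  rw [sbtw_iff_btw_not_btw, btw_cyclic (a := (z : AddCircle p)), QuotientAddGroup.btw_coe_iff,
    QuotientAddGroup.btw_coe_iff, (toIcoMod_eq_self hp.out).2 hy, (toIcoMod_eq_self hp.out).2 hz]
  rcases hy.1.eq_or_lt with rfl | hxy
  · simp [toIocMod_apply_left, hz.2.le]
  rw [(toIocMod_eq_self hp.out).2 ⟨hxy, hy.2.le⟩]
  rcases hz.1.eq_or_lt with rfl | hxz
  · simp [toIocMod_apply_left, hy.2.le, hxy.le]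
  rw [(toIocMod_eq_self hp.out).2 ⟨hxz, hz.2.le⟩, ← lt_iff_le_not_ge]
  exact (and_iff_right hxy).symm

theorem injective_lift_of_strictMono (hG : StrictMono G) (hper : ∀ x, G (x + p) = G x + p) :
    Injective (periodic_coe_comp hper).lift := by
  intro a b hab
  induction a using QuotientAddGroup.induction_on with | _ x
  induction b using QuotientAddGroup.induction_on with | _ y
  rw [← coe_toIcoMod x y] at hab ⊢
  have hy := toIcoMod_mem_Ico hp.out x y
  have hGx : G x ∈ Ico (G x) (G x + p) := ⟨le_rfl, lt_add_of_pos_right _ hp.out⟩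
  rw [Periodic.lift_coe, Periodic.lift_coe,
    coe_eq_coe_iff_of_mem_Ico hGx (mem_Ico_of_strictMono_lift hG hper hy)] at hab
  exact congrArg _ (hG.injective hab)

theorem surjective_lift_of_continuous (hc : Continuous G) (hper : ∀ x, G (x + p) = G x + p) :
    Surjective (periodic_coe_comp hper).lift := by
  intro b
  induction b using QuotientAddGroup.induction_on with | _ y
  have hGp : G 0 + p = G p := by simpa using (hper 0).symm
  obtain ⟨x, -, hx⟩ := intermediate_value_Icc hp.out.le hc.continuousOn
    (Ico_subset_Icc_self (hGp ▸ toIcoMod_mem_Ico hp.out (G 0) y))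
  exact ⟨x, by rw [Periodic.lift_coe, hx, coe_toIcoMod]⟩

theorem sbtw_lift_of_strictMono (hG : StrictMono G) (hper : ∀ x, G (x + p) = G x + p)
    {a b c : AddCircle p} (habc : sbtw a b c) :
    sbtw ((periodic_coe_comp hper).lift a) ((periodic_coe_comp hper).lift b)
      ((periodic_coe_comp hper).lift c) := by
  induction a using QuotientAddGroup.induction_on with | _ x
  induction b using QuotientAddGroup.induction_on with | _ y
  induction c using QuotientAddGroup.induction_on with | _ z
  rw [← coe_toIcoMod x y, ← coe_toIcoMod x z] at habc ⊢
  have hy := toIcoMod_mem_Ico hp.out x y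
  have hz := toIcoMod_mem_Ico hp.out x z
  rw [sbtw_coe_iff_of_mem_Ico hy hz] at habc
  simp only [Periodic.lift_coe]
  rw [sbtw_coe_iff_of_mem_Ico (mem_Ico_of_strictMono_lift hG hper hy)
    (mem_Ico_of_strictMono_lift hG hper hz)]
  exact ⟨hG habc.1, hG habc.2⟩

theorem exists_homeomorph_of_strictMono_lift (hc : Continuous G) (hG : StrictMono G)
    (hper : ∀ x, G (x + p) = G x + p) :
    ∃ ψ : AddCircle p ≃ₜ AddCircle p, (∀ x : ℝ, ψ x = G x) ∧
      ∀ x y z : AddCircle p, sbtw x y z → sbtw (ψ x) (ψ y) (ψ z) := by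
  let F := Equiv.ofBijective _ ⟨injective_lift_of_strictMono hG hper,
    surjective_lift_of_continuous hc hper⟩
  have hF : Continuous F := continuous_coinduced_dom.mpr (continuous_quotient_mk'.comp hc)
  exact ⟨hF.homeoOfEquivCompactToT2, fun _ ↦ rfl, fun _ _ _ ↦ sbtw_lift_of_strictMono hG hper⟩

section DegOneLift

variable (f : AddCircle p → AddCircle p)

noncomputable def degOneLift (x : ℝ) : ℝ :=
  toIcoMod hp.out (f 0).out (f x).out + ⌊x / p⌋ * p

theorem coe_degOneLift (x : ℝ) : (degOneLift f x : AddCircle p) = f x := by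
  rw [degOneLift, coe_add_int_mul_period, coe_toIcoMod, QuotientAddGroup.out_eq']

theorem degOneLift_add_period (x : ℝ) : degOneLift f (x + p) = degOneLift f x + p := by
  have hfloor : ⌊(x + p) / p⌋ = ⌊x / p⌋ + 1 := by
    rw [add_div, div_self hp.out.ne', Int.floor_add_one]
  simp only [degOneLift, coe_add_period, hfloor]
  push_cast
  ring

theorem dist_eq_min_of_degOneLift {x y : ℝ} (hxy : degOneLift f y ≤ degOneLift f x)
    (hyx : degOneLift f x < degOneLift f y + p) :
    dist (f x) (f y) =
      min (degOneLift f x - degOneLift f y) (p - (degOneLift f x - degOneLift f y)) := by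
  rw [← coe_degOneLift f x, ← coe_degOneLift f y, dist_eq_norm, ← coe_sub]
  exact norm_coe_eq_min (sub_nonneg.2 hxy) (by linarith)

variable {f} {T : Set (AddCircle p)}

theorem toIcoMod_out_apply_lt_of_lt (h0 : 0 ∈ T) (hinj : InjOn f T)
    (hord : ∀ x ∈ T, ∀ y ∈ T, ∀ z ∈ T, sbtw x y z → sbtw (f x) (f y) (f z))
    {x₀ u v : ℝ} (hx₀ : (x₀ : AddCircle p) = 0) (hu : (u : AddCircle p) ∈ T)
    (hv : (v : AddCircle p) ∈ T) (hux₀ : x₀ ≤ u) (huv : u < v) (hvx₀ : v < x₀ + p) :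
    toIcoMod hp.out (f 0).out (f u).out < toIcoMod hp.out (f 0).out (f v).out := by
  set r : ℝ → ℝ := fun x ↦ toIcoMod hp.out (f 0).out (f x).out
  have hr : ∀ x, r x ∈ Ico (f 0).out ((f 0).out + p) := fun x ↦ toIcoMod_mem_Ico _ _ _
  have hr_coe : ∀ x : ℝ, (r x : AddCircle p) = f x := fun x ↦ by
    rw [coe_toIcoMod, QuotientAddGroup.out_eq']
  rcases hux₀.eq_or_lt with rfl | hux₀
  · have hru : r x₀ = (f 0).out := by simp only [r, hx₀]; exact toIcoMod_apply_left _ _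
    show r x₀ < r v
    rw [hru]
    refine (hr v).1.lt_of_ne fun h ↦ huv.ne' ?_
    have hfv : f v = f 0 := by rw [← hr_coe, ← h, QuotientAddGroup.out_eq']
    exact (coe_eq_coe_iff_of_mem_Ico ⟨huv.le, hvx₀⟩ ⟨le_rfl, lt_add_of_pos_right _ hp.out⟩).1
      ((hinj hv h0 hfv).trans hx₀.symm)
  · have hs := hord _ h0 _ hu _ hv <| by
      rw [← hx₀, sbtw_coe_iff_of_mem_Ico ⟨hux₀.le, huv.trans hvx₀⟩ ⟨hux₀.le.trans huv.le, hvx₀⟩]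
      exact ⟨hux₀, huv⟩
    rw [← hr_coe, ← hr_coe, ← QuotientAddGroup.out_eq' (f 0),
      sbtw_coe_iff_of_mem_Ico (hr u) (hr v)] at hs
    exact hs.2

theorem strictMonoOn_degOneLift (h0 : 0 ∈ T) (hinj : InjOn f T)
    (hord : ∀ x ∈ T, ∀ y ∈ T, ∀ z ∈ T, sbtw x y z → sbtw (f x) (f y) (f z)) :
    StrictMonoOn (degOneLift f) ((↑) ⁻¹' T) := by
  intro u hu v hv huv
  rw [degOneLift, degOneLift]
  rcases (Int.floor_mono (div_le_div_of_nonneg_right huv.le hp.out.le)).lt_or_eq with hk | hk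
  · have hk' : (⌊u / p⌋ : ℝ) + 1 ≤ ⌊v / p⌋ := by exact_mod_cast hk
    linarith [(toIcoMod_mem_Ico hp.out (f 0).out (f u).out).2,
      (toIcoMod_mem_Ico hp.out (f 0).out (f v).out).1, mul_le_mul_of_nonneg_right hk' hp.out.le]
  rw [hk, add_lt_add_iff_right]
  refine toIcoMod_out_apply_lt_of_lt (x₀ := ⌊v / p⌋ * p) h0 hinj hord
    ((coe_eq_zero_iff p).2 ⟨_, zsmul_eq_mul _ _⟩) hu hv ?_ huv ?_
  · simpa [hk] using Int.sub_floor_div_mul_nonneg u hp.out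
  · linarith [Int.sub_floor_div_mul_lt v hp.out]

end DegOneLift

end AddCircle

section SupExtension

variable {D : Set ℝ} {g : ℝ → ℝ}

noncomputable def supExtension (D : Set ℝ) (g : ℝ → ℝ) (x : ℝ) : ℝ :=
  sSup (g '' (D ∩ Iic x))

theorem le_supExtension (hD : Dense D) (hg : MonotoneOn g D) {q x : ℝ} (hq : q ∈ D)
    (hqx : q ≤ x) : g q ≤ supExtension D g x := by
  obtain ⟨q', hq', hxq', -⟩ := hD.exists_between (lt_add_one x)
  refine le_csSup ⟨g q', ?_⟩ ⟨q, ⟨hq, hqx⟩, rfl⟩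
  rintro _ ⟨s, ⟨hs, hsx⟩, rfl⟩
  exact hg hs hq' (hsx.trans hxq'.le)

theorem supExtension_le (hD : Dense D) (hg : MonotoneOn g D) {q x : ℝ} (hq : q ∈ D)
    (hxq : x ≤ q) : supExtension D g x ≤ g q := by
  obtain ⟨s, hs, -, hsx⟩ := hD.exists_between (sub_one_lt x)
  refine csSup_le ⟨g s, s, ⟨hs, hsx.le⟩, rfl⟩ ?_
  rintro _ ⟨s, ⟨hs, hsx⟩, rfl⟩
  exact hg hs hq (hsx.trans hxq)

theorem supExtension_eqOn (hD : Dense D) (hg : MonotoneOn g D) : EqOn (supExtension D g) g D :=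
  fun _ hq ↦ (supExtension_le hD hg hq le_rfl).antisymm (le_supExtension hD hg hq le_rfl)

theorem monotone_supExtension (hD : Dense D) (hg : MonotoneOn g D) :
    Monotone (supExtension D g) := by
  intro x y hxy
  obtain ⟨s, hs, -, hsx⟩ := hD.exists_between (sub_one_lt x)
  refine csSup_le ⟨g s, s, ⟨hs, hsx.le⟩, rfl⟩ ?_
  rintro _ ⟨q, ⟨hq, hqx⟩, rfl⟩
  exact le_supExtension hD hg hq (hqx.trans hxy)

theorem strictMono_supExtension (hD : Dense D) (hg : StrictMonoOn g D) :
    StrictMono (supExtension D g) := by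
  intro x y hxy
  obtain ⟨q₁, hq₁, hxq₁, hq₁y⟩ := hD.exists_between hxy
  obtain ⟨q₂, hq₂, hq₁q₂, hq₂y⟩ := hD.exists_between hq₁y
  calc supExtension D g x ≤ g q₁ := supExtension_le hD hg.monotoneOn hq₁ hxq₁.le
    _ < g q₂ := hg hq₁ hq₂ hq₁q₂
    _ ≤ supExtension D g y := le_supExtension hD hg.monotoneOn hq₂ hq₂y.le

theorem uniformContinuous_supExtension (hD : Dense D) (hg : MonotoneOn g D)
    (hgu : UniformContinuousOn g D) :
    UniformContinuous (supExtension D g) := by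
  rw [Metric.uniformContinuous_iff]
  intro ε hε
  obtain ⟨δ, hδ, hgδ⟩ := Metric.uniformContinuousOn_iff.1 hgu ε hε
  refine ⟨δ / 3, by positivity, fun {x y} hxy ↦ ?_⟩
  wlog hle : x ≤ y generalizing x y
  · rw [dist_comm]; exact this (dist_comm x y ▸ hxy) (le_of_not_ge hle)
  rw [Real.dist_eq, abs_sub_comm] at hxy ⊢
  have hδ₃ : 0 < δ / 3 := by positivity
  obtain ⟨q₁, hq₁, hq₁x, hxq₁⟩ := hD.exists_between (sub_lt_self x hδ₃)
  obtain ⟨q₂, hq₂, hyq₂, hq₂y⟩ := hD.exists_between (lt_add_of_pos_right y hδ₃)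
  have h₁ := le_supExtension hD hg hq₁ hxq₁.le
  have h₂ := supExtension_le hD hg hq₂ hyq₂.le
  have hq : dist q₂ q₁ < δ := by rw [Real.dist_eq, abs_lt]; constructor <;> linarith [abs_lt.1 hxy]
  have := (le_abs_self _).trans_lt (Real.dist_eq _ _ ▸ hgδ q₂ hq₂ q₁ hq₁ hq)
  rw [abs_of_nonneg (sub_nonneg.2 (monotone_supExtension hD hg hle))]
  linarith

theorem exists_continuous_strictMono_eqOn (hD : Dense D) (hg : StrictMonoOn g D)
    (hgu : UniformContinuousOn g D) :
    ∃ G : ℝ → ℝ, Continuous G ∧ StrictMono G ∧ EqOn G g D :=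
  ⟨supExtension D g, (uniformContinuous_supExtension hD hg.monotoneOn hgu).continuous,
    strictMono_supExtension hD hg, supExtension_eqOn hD hg.monotoneOn⟩

theorem Continuous.apply_add_eq_of_eqOn {G : ℝ → ℝ} (hG : Continuous G) (hD : Dense D)
    (hGg : EqOn G g D) {p : ℝ} (hDp : ∀ x ∈ D, x + p ∈ D) (hg : ∀ x ∈ D, g (x + p) = g x + p)
    (x : ℝ) : G (x + p) = G x + p :=
  congrFun ((hG.comp (continuous_add_const p)).ext_on (g := fun y ↦ G y + p) hD (by fun_prop)
    fun y hy ↦ by simp only [comp_apply, hGg hy, hGg (hDp y hy), hg y hy]) x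

end SupExtension

open AddCircle

local notation "𝕋" => AddCircle (2 * π)

theorem exists_pi_div_two_pow_lt {δ : ℝ} (hδ : 0 < δ) : ∃ n : ℕ, π / 2 ^ n < δ := by
  obtain ⟨n, hn⟩ := exists_pow_lt_of_lt_one (div_pos hδ pi_pos) (by norm_num : (1 / 2 : ℝ) < 1)
  refine ⟨n, ?_⟩
  rwa [one_div_pow, lt_div_iff₀ pi_pos, one_div_mul_eq_div] at hn

theorem dyadic_mem_dyadicQ (a : ℤ) (n : ℕ) : ((a * π / 2 ^ n : ℝ) : 𝕋) ∈ DyadicQ :=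
  ⟨a, n, rfl⟩

theorem dense_preimage_dyadicQ : Dense (((↑) : ℝ → 𝕋) ⁻¹' DyadicQ) := by
  refine dense_of_exists_between fun x y hxy ↦ ?_
  obtain ⟨n, hn⟩ := exists_pi_div_two_pow_lt (sub_pos.2 hxy)
  have hh : 0 < π / 2 ^ n := by positivity
  refine ⟨(⌊x / (π / 2 ^ n)⌋ + 1 : ℤ) * π / 2 ^ n, dyadic_mem_dyadicQ _ n, ?_⟩
  have h₁ := Int.sub_floor_div_mul_nonneg x hh
  have h₂ := Int.sub_floor_div_mul_lt x hh
  push_cast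
  rw [mul_div_assoc, add_mul, one_mul]
  constructor <;> linarith

theorem exists_int_mul_pi_le (a : ℤ) (n : ℕ) :
    ∃ m : ℤ, m * π ≤ (a - 1) * π / 2 ^ n ∧ a * π / 2 ^ n ≤ (m + 1) * π := by
  have h2 : (0 : ℤ) < 2 ^ n := by positivity
  refine ⟨(a - 1) / 2 ^ n, ?_, ?_⟩
  · have := Int.ediv_mul_le (a - 1) h2.ne'
    rw [le_div_iff₀ (by positivity), mul_right_comm]
    exact mul_le_mul_of_nonneg_right (by exact_mod_cast this) pi_pos.le
  · have := Int.lt_ediv_add_one_mul_self (a - 1) h2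
    rw [div_le_iff₀ (by positivity), mul_right_comm]
    have ha : a ≤ ((a - 1) / 2 ^ n + 1) * 2 ^ n := by omega
    exact mul_le_mul_of_nonneg_right (by exact_mod_cast ha) pi_pos.le

theorem dist_apply_int_mul_pi (φ : 𝕋 → 𝕋) (m : ℤ) :
    dist (φ (((m + 1) * π : ℝ) : 𝕋)) (φ ((m * π : ℝ) : 𝕋)) = dist (φ (π : 𝕋)) (φ 0) := by
  obtain ⟨k, rfl | rfl⟩ := Int.even_or_odd' m
  · have h₀ : ((2 * k : ℤ) * π : ℝ) = 0 + k * (2 * π) := by push_cast; ring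
    have h₁ : (((2 * k : ℤ) + 1) * π : ℝ) = π + k * (2 * π) := by push_cast; ring
    rw [h₀, h₁, coe_add_int_mul_period, coe_add_int_mul_period,
      AddCircle.coe_zero]
  · have h₁ : ((2 * k + 1 : ℤ) * π : ℝ) = π + k * (2 * π) := by push_cast; ring
    have h₂ : (((2 * k + 1 : ℤ) + 1) * π : ℝ) = 0 + (k + 1 : ℤ) * (2 * π) := by push_cast; ring
    rw [h₁, h₂, coe_add_int_mul_period, coe_add_int_mul_period,
      AddCircle.coe_zero, dist_comm]

theorem exists_dist_dyadic_lt_of_continuous {ψ : 𝕋 → 𝕋} (hψ : Continuous ψ) {ε : ℝ}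
    (hε : 0 < ε) :
    ∃ n : ℕ, ∀ a : ℤ,
      dist (ψ ((a * π / 2 ^ n : ℝ) : 𝕋)) (ψ (((a - 1) * π / 2 ^ n : ℝ) : 𝕋)) < ε := by
  obtain ⟨δ, hδ, hψδ⟩ :=
    Metric.uniformContinuous_iff.1 (CompactSpace.uniformContinuous_of_continuous hψ) ε hε
  obtain ⟨n, hn⟩ := exists_pi_div_two_pow_lt hδ
  refine ⟨n, fun a ↦ hψδ ((dist_coe_le_dist _ _).trans_lt ?_)⟩
  rwa [Real.dist_eq, ← sub_div, ← sub_mul, sub_sub_cancel, one_mul,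
    abs_of_pos (by positivity)]

theorem degOneLift_dyadic_step_lt {φ : 𝕋 → 𝕋}
    (hmono : StrictMonoOn (degOneLift φ) ((↑) ⁻¹' DyadicQ)) {ε : ℝ}
    (hε : ε ≤ dist (φ (π : 𝕋)) (φ 0)) {n : ℕ} {a : ℤ}
    (hstep : dist (φ ((a * π / 2 ^ n : ℝ) : 𝕋)) (φ (((a - 1) * π / 2 ^ n : ℝ) : 𝕋)) < ε) :
    degOneLift φ (a * π / 2 ^ n) - degOneLift φ ((a - 1) * π / 2 ^ n) < ε := by
  set L := degOneLift φ
  obtain ⟨m, hmu, hvm⟩ := exists_int_mul_pi_le a n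
  have hu : ((a - 1) * π / 2 ^ n : ℝ) ∈ ((↑) ⁻¹' DyadicQ : Set ℝ) := by
    simpa using dyadic_mem_dyadicQ (a - 1) n
  have hv := dyadic_mem_dyadicQ a n
  have hs₀ : (m * π : ℝ) ∈ ((↑) ⁻¹' DyadicQ : Set ℝ) := by simpa using dyadic_mem_dyadicQ m 0
  have hs₁ : ((m + 1) * π : ℝ) ∈ ((↑) ⁻¹' DyadicQ : Set ℝ) := by
    simpa using dyadic_mem_dyadicQ (m + 1) 0
  have hs₂ : (m * π + 2 * π : ℝ) ∈ ((↑) ⁻¹' DyadicQ : Set ℝ) := by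
    rwa [mem_preimage, coe_add_period]
  have huv : (a - 1) * π / 2 ^ n < a * π / 2 ^ n := by gcongr; linarith
  have hΔ₀ : L (m * π) ≤ L ((m + 1) * π) := hmono.monotoneOn hs₀ hs₁ (by linarith [pi_pos])
  have hΔ₁ : L ((m + 1) * π) < L (m * π) + 2 * π := by
    rw [← degOneLift_add_period]; exact hmono hs₁ hs₂ (by linarith [pi_pos])
  have hΔ : dist (φ (π : 𝕋)) (φ 0) ≤ 2 * π - (L ((m + 1) * π) - L (m * π)) := by
    rw [← dist_apply_int_mul_pi φ m, dist_eq_min_of_degOneLift φ hΔ₀ hΔ₁]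
    exact min_le_right _ _
  have hδ : L (a * π / 2 ^ n) - L ((a - 1) * π / 2 ^ n) ≤ L ((m + 1) * π) - L (m * π) :=
    sub_le_sub (hmono.monotoneOn hv hs₁ hvm) (hmono.monotoneOn hs₀ hu hmu)
  rw [dist_eq_min_of_degOneLift φ (hmono hu hv huv).le (by linarith)] at hstep
  exact (min_lt_iff.1 hstep).resolve_right (by linarith)

theorem uniformContinuousOn_degOneLift {φ : 𝕋 → 𝕋} (hinj : InjOn φ DyadicQ)
    (hmono : StrictMonoOn (degOneLift φ) ((↑) ⁻¹' DyadicQ))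
    (hφ : ∀ ε > 0, ∃ n : ℕ, ∀ a : ℤ,
      dist (φ ((a * π / 2 ^ n : ℝ) : 𝕋)) (φ (((a - 1) * π / 2 ^ n : ℝ) : 𝕋)) < ε) :
    UniformContinuousOn (degOneLift φ) ((↑) ⁻¹' DyadicQ) := by
  refine Metric.uniformContinuousOn_iff.2 fun ε hε ↦ ?_
  set L := degOneLift φ
  have hπ : (π : 𝕋) ≠ 0 := by
    rw [← AddCircle.coe_zero, Ne, AddCircle.coe_eq_coe_iff_of_mem_Ico (a := 0)
      ⟨pi_pos.le, by linarith [pi_pos]⟩ ⟨le_rfl, by positivity⟩]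
    exact pi_ne_zero
  have hD₀ : 0 < dist (φ (π : 𝕋)) (φ 0) :=
    dist_pos.2 fun h ↦ hπ (hinj ⟨1, 0, by simp⟩ ⟨0, 0, by simp⟩ h)
  obtain ⟨n, hn⟩ := hφ (min (ε / 2) (dist (φ (π : 𝕋)) (φ 0))) (lt_min (half_pos hε) hD₀)
  have hstep (a : ℤ) : L (a * π / 2 ^ n) - L ((a - 1) * π / 2 ^ n) < ε / 2 :=
    (degOneLift_dyadic_step_lt hmono (min_le_right _ _) (hn a)).trans_le (min_le_left _ _)
  have hh : 0 < π / 2 ^ n := by positivity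
  refine ⟨π / 2 ^ n, hh, fun u hu v hv huv ↦ ?_⟩
  wlog hle : u ≤ v generalizing u v
  · rw [dist_comm]; exact this v hv u hu (dist_comm u v ▸ huv) (le_of_not_ge hle)
  rw [Real.dist_eq, abs_sub_comm, abs_of_nonneg (sub_nonneg.2 hle)] at huv
  rw [Real.dist_eq, abs_sub_comm, abs_of_nonneg (sub_nonneg.2 (hmono.monotoneOn hu hv hle))]
  have hfloor₀ := Int.sub_floor_div_mul_nonneg u hh
  have hfloor₁ := Int.sub_floor_div_mul_lt u hh
  set a := ⌊u / (π / 2 ^ n)⌋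
  have ha₁ : a * π / 2 ^ n ≤ u := by rw [mul_div_assoc]; linarith
  have ha₂ : v ≤ (a + 2) * π / 2 ^ n := by rw [mul_div_assoc, add_mul]; linarith
  have h₁ := hstep (a + 1)
  have h₂ := hstep (a + 2)
  push_cast at h₁ h₂
  rw [add_sub_cancel_right] at h₁
  rw [show (a : ℝ) + 2 - 1 = a + 1 by ring] at h₂
  have hLu := hmono.monotoneOn (dyadic_mem_dyadicQ a n) hu ha₁
  have hLv := hmono.monotoneOn hv (by simpa using dyadic_mem_dyadicQ (a + 2) n) ha₂
  linarith

/-- A cyclic-order-preserving injection φ : Q → S¹ extends to an orientation preserving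
homeomorphism of S¹ if and only if for every ε > 0 there is n such that for all a ∈ ℤ
the distance between φ(aπ/2ⁿ) and φ((a−1)π/2ⁿ) is less than ε. -/
theorem stmt11 (φ : AddCircle (2 * Real.pi) → AddCircle (2 * Real.pi))
    (hinj : Set.InjOn φ DyadicQ)
    (hord : ∀ x ∈ DyadicQ, ∀ y ∈ DyadicQ, ∀ z ∈ DyadicQ,
      sbtw x y z → sbtw (φ x) (φ y) (φ z)) :
    (∃ ψ : AddCircle (2 * Real.pi) ≃ₜ AddCircle (2 * Real.pi),
        (∀ q ∈ DyadicQ, ψ q = φ q) ∧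
        (∀ x y z : AddCircle (2 * Real.pi), sbtw x y z → sbtw (ψ x) (ψ y) (ψ z))) ↔
    (∀ ε > 0, ∃ n : ℕ, ∀ a : ℤ,
      dist (φ (((a : ℝ) * Real.pi / 2 ^ n : ℝ) : AddCircle (2 * Real.pi)))
        (φ ((((a : ℝ) - 1) * Real.pi / 2 ^ n : ℝ) : AddCircle (2 * Real.pi))) < ε) := by
  constructor
  · rintro ⟨ψ, hψφ, -⟩ ε hε
    obtain ⟨n, hn⟩ := exists_dist_dyadic_lt_of_continuous ψ.continuous hε
    refine ⟨n, fun a ↦ ?_⟩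
    rw [← hψφ _ (dyadic_mem_dyadicQ a n), ← hψφ _ (by simpa using dyadic_mem_dyadicQ (a - 1) n)]
    exact hn a
  · intro hφ
    have hmono := strictMonoOn_degOneLift (T := DyadicQ) ⟨0, 0, by simp⟩ hinj hord
    obtain ⟨G, hGc, hG, hGL⟩ := exists_continuous_strictMono_eqOn dense_preimage_dyadicQ hmono
      (uniformContinuousOn_degOneLift hinj hmono hφ)
    have hGper := hGc.apply_add_eq_of_eqOn dense_preimage_dyadicQ hGL
      (fun x hx ↦ by rwa [mem_preimage, coe_add_period]) fun x _ ↦ degOneLift_add_period φ x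
    obtain ⟨ψ, hψG, hψ⟩ := exists_homeomorph_of_strictMono_lift hGc hG hGper
    refine ⟨ψ, ?_, hψ⟩
    rintro _ ⟨a, n, rfl⟩
    rw [hψG, hGL (dyadic_mem_dyadicQ a n), coe_degOneLift]
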